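/- arXiv:0810.4322 — 2 statements merged into one kernel-verified Lean document; each statement's English description precedes it below -/
import Mathlib

section
/- Let Ω ⊂ ℝ³ be open with C¹ boundary, and let u, v : closure(Ω) → ℝ³ be C¹ vector fields both vanishing on a relatively open portion Γ of ∂Ω, with u divergence-free. Then at every point of Γ: (a) ε(u)·n · (∂u/∂n) = |ε(u)|², and (b) (ε(v)·n) · (∂u/∂n) = ε(u) : ε(v), where ε(w) = ½(∇w + (∇w)ᵀ), n is the outward unit normal, and A : B = Σᵢⱼ AᵢⱼBᵢⱼ. -/
/-!
Since `u` and `v` vanish on `Γ`, their derivatives at `x ∈ Γ` vanish on the tangent cone, which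
contains `n(x)^⊥`; hence `∇u = c ⊗ n` and `∇v = d ⊗ n` with `c = ∂u/∂n`, `d = ∂v/∂n`, and
`ε(u)`, `ε(v)` are the symmetrised outer products of `c`, `d` with `n`. Both identities are then
the algebraic identity `sym(c ⊗ n) : sym(d ⊗ n) = (sym(d ⊗ n) n) · c`, whose two sides equal
`(|n|² c·d + (c·n)(d·n)) / 2`.
-/

open scoped BigOperators

/-- Entry `(i,j)` of the stretching tensor `ε(w) = ½(∇w + (∇w)ᵀ)`. -/
noncomputable def eps (w : (Fin 3 → ℝ) → (Fin 3 → ℝ)) (i j : Fin 3) (x : Fin 3 → ℝ) : ℝ :=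
  (fderiv ℝ (fun y => w y i) x (Pi.single j 1)
    + fderiv ℝ (fun y => w y j) x (Pi.single i 1)) / 2

theorem fderiv_apply_eq_zero_of_mem_tangentConeAt {𝕜 E F : Type*} [NontriviallyNormedField 𝕜]
    [NormedAddCommGroup E] [NormedSpace 𝕜 E] [NormedAddCommGroup F] [NormedSpace 𝕜 F]
    {f : E → F} {s : Set E} {x t : E} (hf : DifferentiableAt 𝕜 f x) (hs : Set.EqOn f 0 s)
    (hx : x ∈ s) (ht : t ∈ tangentConeAt 𝕜 s x) : fderiv 𝕜 f x t = 0 :=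
  hf.hasFDerivAt.hasFDerivWithinAt.unique_on
    ((hasFDerivWithinAt_const 0 x s).congr hs (hs hx)) ht

/-- Write `Pi.single j 1 = n j • n + t` with `t ⟂ n`. -/
theorem ContinuousLinearMap.apply_single_eq_of_orthogonal_eq_zero {ι : Type*} [Fintype ι]
    [DecidableEq ι] (L : (ι → ℝ) →L[ℝ] ℝ) {n : ι → ℝ} (hn : ∑ i, n i ^ 2 = 1)
    (hL : ∀ t : ι → ℝ, ∑ i, t i * n i = 0 → L t = 0) (j : ι) :
    L (Pi.single j 1) = n j * L n := by
  have horth : ∑ i, (Pi.single j 1 - n j • n : ι → ℝ) i * n i = 0 := by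
    simp only [Pi.sub_apply, Pi.smul_apply, smul_eq_mul, sub_mul, Finset.sum_sub_distrib,
      Pi.single_apply, ite_mul, one_mul, zero_mul, Finset.sum_ite_eq', Finset.mem_univ, if_true,
      mul_assoc, ← Finset.mul_sum, ← sq, hn, mul_one, sub_self]
  have hL0 := hL _ horth
  rwa [map_sub, map_smul, smul_eq_mul, sub_eq_zero] at hL0

noncomputable def symOuter {ι : Type*} (c n : ι → ℝ) (i j : ι) : ℝ := (c i * n j + c j * n i) / 2

theorem symOuter_comm {ι : Type*} (c n : ι → ℝ) (i j : ι) :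
    symOuter c n i j = symOuter c n j i := by
  simp only [symOuter, add_comm]

theorem sum_sum_symOuter_mul_symOuter {ι : Type*} [Fintype ι] (c d n : ι → ℝ) :
    ∑ i, ∑ j, symOuter c n i j * symOuter d n i j
      = ∑ i, (∑ j, symOuter d n i j * n j) * c i := by
  set g : ι → ι → ℝ := fun i j => symOuter d n i j * n j * c i
  calc ∑ i, ∑ j, symOuter c n i j * symOuter d n i j = ∑ i, ∑ j, (g i j + g j i) / 2 := by
        refine Fintype.sum_congr _ _ fun i => Fintype.sum_congr _ _ fun j => ?_
        simp only [g, symOuter_comm d n j i]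
        simp only [symOuter]
        ring
    _ = ∑ i, ∑ j, g i j := by
        simp only [add_div, Finset.sum_add_distrib]
        rw [Finset.sum_comm (f := fun i j => g j i / 2), ← Finset.sum_add_distrib]
        simp only [← Finset.sum_add_distrib, add_halves]
    _ = ∑ i, (∑ j, symOuter d n i j * n j) * c i := by simp only [g, Finset.sum_mul]

theorem eps_eq_symOuter_of_eqOn_zero {w : (Fin 3 → ℝ) → (Fin 3 → ℝ)} {Γ : Set (Fin 3 → ℝ)}
    {x ν : Fin 3 → ℝ} (hw : DifferentiableAt ℝ w x) (hΓ : Set.EqOn w 0 Γ) (hx : x ∈ Γ)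
    (hν : ∑ i, ν i ^ 2 = 1)
    (htan : ∀ t : Fin 3 → ℝ, ∑ i, t i * ν i = 0 → t ∈ tangentConeAt ℝ Γ x) (i j : Fin 3) :
    eps w i j x = symOuter (fun k => fderiv ℝ (fun y => w y k) x ν) ν i j := by
  have hgrad : ∀ k l, fderiv ℝ (fun y => w y k) x (Pi.single l 1)
      = ν l * fderiv ℝ (fun y => w y k) x ν := fun k =>
    (fderiv ℝ _ x).apply_single_eq_of_orthogonal_eq_zero hν fun t ht =>
      fderiv_apply_eq_zero_of_mem_tangentConeAt (differentiableAt_pi.1 hw k)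
        (fun y hy => by simp [hΓ hy]) hx (htan t ht)
  simp only [eps, symOuter, hgrad]
  ring

theorem eps_normal_identities_on_boundary_general
    (Γ : Set (Fin 3 → ℝ))
    (u v : (Fin 3 → ℝ) → (Fin 3 → ℝ))
    (hu : ContDiff ℝ 1 u) (hv : ContDiff ℝ 1 v)
    (huΓ : ∀ x ∈ Γ, u x = 0) (hvΓ : ∀ x ∈ Γ, v x = 0)
    (n : (Fin 3 → ℝ) → (Fin 3 → ℝ))
    (hn : ∀ x ∈ Γ, ∑ i : Fin 3, (n x i) ^ 2 = 1)
    (htan : ∀ x ∈ Γ, ∀ t : Fin 3 → ℝ,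
      (∑ i : Fin 3, t i * n x i) = 0 → t ∈ tangentConeAt ℝ Γ x) :
    ∀ x ∈ Γ,
      (∑ i : Fin 3, (∑ j : Fin 3, eps u i j x * n x j)
          * fderiv ℝ (fun y => u y i) x (n x)
        = ∑ i : Fin 3, ∑ j : Fin 3, (eps u i j x) ^ 2)
      ∧ (∑ i : Fin 3, (∑ j : Fin 3, eps v i j x * n x j)
          * fderiv ℝ (fun y => u y i) x (n x)
        = ∑ i : Fin 3, ∑ j : Fin 3, eps u i j x * eps v i j x) := by
  intro x hx
  have hε : ∀ w : (Fin 3 → ℝ) → (Fin 3 → ℝ), ContDiff ℝ 1 w → Set.EqOn w 0 Γ → ∀ i j,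
      eps w i j x = symOuter (fun k => fderiv ℝ (fun y => w y k) x (n x)) (n x) i j :=
    fun w hw hw0 => eps_eq_symOuter_of_eqOn_zero (hw.differentiable one_ne_zero x) hw0 hx
      (hn x hx) (htan x hx)
  simp only [hε u hu huΓ, hε v hv hvΓ, sq]
  exact ⟨(sum_sum_symOuter_mul_symOuter _ _ _).symm, (sum_sum_symOuter_mul_symOuter _ _ _).symm⟩

/-- If `u, v` are C¹ fields vanishing on a relatively open C¹ portion `Γ` of `∂Ω` (with
outward unit normal `n`, C¹ regularity encoded via the tangent cone), and `u` is
divergence-free, then on `Γ`: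
(a) `ε(u)·n · ∂u/∂n = |ε(u)|²` and (b) `ε(v)·n · ∂u/∂n = ε(u) : ε(v)`. -/
theorem eps_normal_identities_on_boundary
    (Ω Γ : Set (Fin 3 → ℝ)) (hΩ : IsOpen Ω)
    (hΓsub : Γ ⊆ frontier Ω)
    (hΓrelopen : ∃ U : Set (Fin 3 → ℝ), IsOpen U ∧ Γ = U ∩ frontier Ω)
    (u v : (Fin 3 → ℝ) → (Fin 3 → ℝ))
    (hu : ContDiff ℝ 1 u) (hv : ContDiff ℝ 1 v)
    (hdiv : ∀ x ∈ Ω, ∑ i : Fin 3, fderiv ℝ (fun y => u y i) x (Pi.single i 1) = 0)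
    (huΓ : ∀ x ∈ Γ, u x = 0) (hvΓ : ∀ x ∈ Γ, v x = 0)
    (n : (Fin 3 → ℝ) → (Fin 3 → ℝ))
    (hn : ∀ x ∈ Γ, ∑ i : Fin 3, (n x i) ^ 2 = 1)
    (htan : ∀ x ∈ Γ, ∀ t : Fin 3 → ℝ,
      (∑ i : Fin 3, t i * n x i) = 0 → t ∈ tangentConeAt ℝ Γ x) :
    ∀ x ∈ Γ,
      (∑ i : Fin 3, (∑ j : Fin 3, eps u i j x * n x j)
          * fderiv ℝ (fun y => u y i) x (n x)
        = ∑ i : Fin 3, ∑ j : Fin 3, (eps u i j x) ^ 2)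
      ∧ (∑ i : Fin 3, (∑ j : Fin 3, eps v i j x * n x j)
          * fderiv ℝ (fun y => u y i) x (n x)
        = ∑ i : Fin 3, ∑ j : Fin 3, eps u i j x * eps v i j x) :=
  eps_normal_identities_on_boundary_general Γ u v hu hv huΓ hvΓ n hn htan
end

section
/- Let β ∈ C²((0,R)×(0,L)) ∩ C¹([0,R]×[0,L]) satisfy −μ(∂²β/∂r² + (3/r)∂β/∂r + ∂²β/∂x₃²) − c(r²−R²)∂β/∂x₃ = 0 in (0,R)×(0,L), with boundary conditions β(r,0)=0, β(R,x₃)=0, ∂β/∂r(0,x₃)=0, and μ ∂β/∂x₃(r,L) + c(r²−R²)β(r,L) = 0, where μ > 0 and c < 0. Then β ≡ 0. -/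
/-!
Multiply the equation by `r³ β`. For the field
`F = (μ r³ β ∂ᵣβ, μ r³ β ∂_zβ + (c/2)(r² - R²) r³ β²)` the equation says exactly
`div F = μ r³ |∇β|²`. By the divergence theorem on `[0,R] × [0,L]`, the integral of
`μ r³ |∇β|²` is the flux of `F` through the boundary. That flux vanishes on `z = 0` and
`r = R`, where `β = 0`, and on the axis `r = 0` thanks to the weight `r³`; on `z = L` the
Robin condition turns it into `(c/2) ∫ (R² - r²) r³ β(r,L)² dr ≤ 0`. Hence `∇β = 0` in the
open rectangle, so `β` is constant there and, by continuity up to `z = 0`, equal to `0`.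
-/

open Set MeasureTheory Filter Topology

section General

variable {E F : Type*} [NormedAddCommGroup E] [NormedSpace ℝ E] [NormedAddCommGroup F]
  [NormedSpace ℝ F] {f : E → F} {s : Set E} {p : E}

theorem differentiableAt_fderivWithin_apply (hs : s ∈ 𝓝 p) (hf : ContDiffAt ℝ 2 f p) (v : E) :
    DifferentiableAt ℝ (fun q => fderivWithin ℝ f s q v) p := by
  have h : (fun q => fderiv ℝ f q v) =ᶠ[𝓝 p] fun q => fderivWithin ℝ f s q v := by
    filter_upwards [eventually_mem_nhds_iff.2 hs] with q hq
    rw [fderivWithin_of_mem_nhds hq]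
  exact (((hf.fderiv_right le_rfl).differentiableAt one_ne_zero).clm_apply
    (differentiableAt_const v)).congr_of_eventuallyEq h.symm

theorem continuousOn_fderivWithin_apply (hf : ContDiffOn ℝ 1 f s) (hs : UniqueDiffOn ℝ s) (v : E) :
    ContinuousOn (fun q => fderivWithin ℝ f s q v) s :=
  (hf.continuousOn_fderivWithin hs le_rfl).clm_apply continuousOn_const

theorem IsOpen.eqOn_closure_of_fderiv_eq_zero (hs : IsOpen s) (hs' : IsPreconnected s)
    (hf : DifferentiableOn ℝ f s) (hcont : ContinuousOn f (closure s))
    (hf' : s.EqOn (fderiv ℝ f) 0) {x₀ : E} (hx₀ : x₀ ∈ closure s) :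
    EqOn f (fun _ => f x₀) (closure s) := by
  obtain ⟨a, ha⟩ := hs.exists_is_const_of_fderiv_eq_zero hs' hf hf'
  have h : EqOn f (fun _ => a) (closure s) :=
    EqOn.of_subset_closure ha hcont continuousOn_const subset_closure subset_rfl
  intro x hx
  rw [h hx, h hx₀]

end General

theorem eqOn_zero_of_setIntegral_nonpos {X : Type*} [TopologicalSpace X] [T2Space X]
    [MeasurableSpace X] [OpensMeasurableSpace X] {ν : Measure X} [ν.IsOpenPosMeasure]
    [IsFiniteMeasureOnCompacts ν] {G : X → ℝ} {K U : Set X} (hK : IsCompact K) (hU : IsOpen U)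
    (hUK : U ⊆ K) (hG : ContinuousOn G K) (hG0 : ∀ x ∈ K, 0 ≤ G x)
    (hint : ∫ x in K, G x ∂ν ≤ 0) : EqOn G 0 U := by
  have hnn : 0 ≤ᵐ[ν.restrict K] G := (ae_restrict_iff' hK.measurableSet).2 (ae_of_all _ hG0)
  have hzero := (setIntegral_eq_zero_iff_of_nonneg_ae hnn (hG.integrableOn_compact hK)).1
    (le_antisymm hint (setIntegral_nonneg hK.measurableSet hG0))
  exact Measure.eqOn_open_of_ae_eq (ae_restrict_of_ae_restrict_of_subset hUK hzero) hU
    (hG.mono hUK) continuousOn_const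

theorem setIntegral_eq_boundary_of_divergence_eq {f g G : ℝ × ℝ → ℝ} {a₁ b₁ a₂ b₂ : ℝ}
    (h₁ : a₁ ≤ b₁) (h₂ : a₂ ≤ b₂) (hf : ContinuousOn f (Icc a₁ b₁ ×ˢ Icc a₂ b₂))
    (hg : ContinuousOn g (Icc a₁ b₁ ×ˢ Icc a₂ b₂)) (hG : ContinuousOn G (Icc a₁ b₁ ×ˢ Icc a₂ b₂))
    (hdf : ∀ p ∈ Ioo a₁ b₁ ×ˢ Ioo a₂ b₂, DifferentiableAt ℝ f p)
    (hdg : ∀ p ∈ Ioo a₁ b₁ ×ˢ Ioo a₂ b₂, DifferentiableAt ℝ g p)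
    (hdiv : ∀ p ∈ Ioo a₁ b₁ ×ˢ Ioo a₂ b₂, fderiv ℝ f p (1, 0) + fderiv ℝ g p (0, 1) = G p) :
    ∫ p in Icc a₁ b₁ ×ˢ Icc a₂ b₂, G p =
      (∫ x in a₁..b₁, g (x, b₂)) - (∫ x in a₁..b₁, g (x, a₂)) + (∫ y in a₂..b₂, f (b₁, y))
        - ∫ y in a₂..b₂, f (a₁, y) := by
  have hae : Ioo a₁ b₁ ×ˢ Ioo a₂ b₂ =ᵐ[volume] Icc a₁ b₁ ×ˢ Icc a₂ b₂ := by
    rw [Measure.volume_eq_prod]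
    exact Measure.set_prod_ae_eq Ioo_ae_eq_Icc Ioo_ae_eq_Icc
  have hopen : MeasurableSet (Ioo a₁ b₁ ×ˢ Ioo a₂ b₂) := measurableSet_Ioo.prod measurableSet_Ioo
  have hdiv' : EqOn G (fun p => fderiv ℝ f p (1, 0) + fderiv ℝ g p (0, 1))
      (Ioo a₁ b₁ ×ˢ Ioo a₂ b₂) := fun p hp => (hdiv p hp).symm
  have hint : IntegrableOn (fun p => fderiv ℝ f p (1, 0) + fderiv ℝ g p (0, 1))
      (Icc a₁ b₁ ×ˢ Icc a₂ b₂) :=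
    (((hG.integrableOn_compact (isCompact_Icc.prod isCompact_Icc)).congr_set_ae hae).congr_fun
      hdiv' hopen).congr_set_ae hae.symm
  rw [← setIntegral_congr_set hae, setIntegral_congr_fun hopen hdiv', setIntegral_congr_set hae]
  rw [Icc_prod_Icc] at hf hg hint ⊢
  exact integral_divergence_prod_Icc_of_hasFDerivAt_off_countable_of_le f g
    (fun p => fderiv ℝ f p) (fun p => fderiv ℝ g p) (a₁, a₂) (b₁, b₂) ⟨h₁, h₂⟩ ∅ countable_empty
    hf hg (fun p hp => (hdf p hp.1).hasFDerivAt) (fun p hp => (hdg p hp.1).hasFDerivAt) hint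

noncomputable section Flux

variable (μ c R : ℝ) (β : ℝ × ℝ → ℝ) (S : Set (ℝ × ℝ))

def radialFlux (q : ℝ × ℝ) : ℝ := μ * q.1 ^ 3 * (fderivWithin ℝ β S q (1, 0) * β q)

def axialFlux (q : ℝ × ℝ) : ℝ :=
  μ * q.1 ^ 3 * (fderivWithin ℝ β S q (0, 1) * β q)
    + c / 2 * ((q.1 ^ 2 - R ^ 2) * q.1 ^ 3 * β q ^ 2)

def energyDensity (q : ℝ × ℝ) : ℝ :=
  μ * q.1 ^ 3 * (fderivWithin ℝ β S q (1, 0) ^ 2 + fderivWithin ℝ β S q (0, 1) ^ 2)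

variable {μ c R β S}

theorem continuousOn_radialFlux (hβ : ContDiffOn ℝ 1 β S) (hS : UniqueDiffOn ℝ S) :
    ContinuousOn (radialFlux μ β S) S := by
  have := continuousOn_fderivWithin_apply hβ hS (1, 0)
  have := hβ.continuousOn
  unfold radialFlux
  fun_prop

theorem continuousOn_axialFlux (hβ : ContDiffOn ℝ 1 β S) (hS : UniqueDiffOn ℝ S) :
    ContinuousOn (axialFlux μ c R β S) S := by
  have := continuousOn_fderivWithin_apply hβ hS (0, 1)
  have := hβ.continuousOn
  unfold axialFlux
  fun_prop

theorem continuousOn_energyDensity (hβ : ContDiffOn ℝ 1 β S) (hS : UniqueDiffOn ℝ S) :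
    ContinuousOn (energyDensity μ β S) S := by
  have := continuousOn_fderivWithin_apply hβ hS (1, 0)
  have := continuousOn_fderivWithin_apply hβ hS (0, 1)
  unfold energyDensity
  fun_prop

variable {p : ℝ × ℝ}

theorem differentiableAt_radialFlux (hS : S ∈ 𝓝 p) (hβ : ContDiffAt ℝ 2 β p) :
    DifferentiableAt ℝ (radialFlux μ β S) p := by
  have := differentiableAt_fderivWithin_apply hS hβ (1, 0)
  have := hβ.differentiableAt two_ne_zero
  unfold radialFlux
  fun_prop

theorem differentiableAt_axialFlux (hS : S ∈ 𝓝 p) (hβ : ContDiffAt ℝ 2 β p) :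
    DifferentiableAt ℝ (axialFlux μ c R β S) p := by
  have := differentiableAt_fderivWithin_apply hS hβ (0, 1)
  have := hβ.differentiableAt two_ne_zero
  unfold axialFlux
  fun_prop

theorem fderiv_radialFlux_add_fderiv_axialFlux (hS : S ∈ 𝓝 p) (hβ : ContDiffAt ℝ 2 β p)
    (hp : p.1 ≠ 0)
    (hpde : -μ * (fderivWithin ℝ (fun q => fderivWithin ℝ β S q (1, 0)) S p (1, 0)
              + (3 / p.1) * fderivWithin ℝ β S p (1, 0)
              + fderivWithin ℝ (fun q => fderivWithin ℝ β S q (0, 1)) S p (0, 1))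
          - c * (p.1 ^ 2 - R ^ 2) * fderivWithin ℝ β S p (0, 1) = 0) :
    fderiv ℝ (radialFlux μ β S) p (1, 0) + fderiv ℝ (axialFlux μ c R β S) p (0, 1) =
      energyDensity μ β S p := by
  have hA := differentiableAt_fderivWithin_apply hS hβ (1, 0)
  have hB := differentiableAt_fderivWithin_apply hS hβ (0, 1)
  have hβ' := hβ.differentiableAt two_ne_zero
  have hf : HasFDerivAt (radialFlux μ β S) _ p :=
    ((hasFDerivAt_fst.pow 3).const_mul μ).mul (hA.hasFDerivAt.mul hβ'.hasFDerivAt)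
  have hg : HasFDerivAt (axialFlux μ c R β S) _ p :=
    (((hasFDerivAt_fst.pow 3).const_mul μ).mul (hB.hasFDerivAt.mul hβ'.hasFDerivAt)).add
      (((((hasFDerivAt_fst.pow 2).sub_const (R ^ 2)).mul (hasFDerivAt_fst.pow 3)).mul
        (hβ'.hasFDerivAt.pow 2)).const_mul (c / 2))
  rw [hf.fderiv, hg.fderiv, energyDensity]
  simp only [fderivWithin_of_mem_nhds hS] at hpde ⊢
  field_simp at hpde
  simp only [smul_add, Nat.add_one_sub_one, nsmul_eq_mul, Nat.cast_ofNat,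
    add_apply, smul_apply, smul_eq_mul,
    ContinuousLinearMap.coe_fst', mul_one, Pi.mul_apply, pow_one, mul_zero, add_zero]
  linear_combination (-(p.1 ^ 2) * β p) * hpde

theorem axialFlux_eq_zero_of_eq_zero (h : β p = 0) : axialFlux μ c R β S p = 0 := by
  simp [axialFlux, h]

theorem radialFlux_eq_zero_of_eq_zero (h : β p = 0) : radialFlux μ β S p = 0 := by
  simp [radialFlux, h]

theorem axialFlux_nonpos_of_robin (hc : c ≤ 0) (hp : 0 ≤ p.1) (hpR : p.1 ^ 2 ≤ R ^ 2)
    (hrobin : μ * fderivWithin ℝ β S p (0, 1) + c * (p.1 ^ 2 - R ^ 2) * β p = 0) :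
    axialFlux μ c R β S p ≤ 0 := by
  have h : axialFlux μ c R β S p = c / 2 * ((R ^ 2 - p.1 ^ 2) * p.1 ^ 3 * β p ^ 2) := by
    unfold axialFlux
    linear_combination (p.1 ^ 3 * β p) * hrobin
  rw [h]
  exact mul_nonpos_of_nonpos_of_nonneg (by linarith)
    (mul_nonneg (mul_nonneg (sub_nonneg.2 hpR) (pow_nonneg hp 3)) (sq_nonneg _))

theorem energyDensity_nonneg (hμ : 0 ≤ μ) (hp : 0 ≤ p.1) : 0 ≤ energyDensity μ β S p := by
  unfold energyDensity
  positivity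

theorem fderivWithin_eq_zero_of_energyDensity_eq_zero (hμ : 0 < μ) (hp : 0 < p.1)
    (h : energyDensity μ β S p = 0) : fderivWithin ℝ β S p = 0 := by
  have hsum : fderivWithin ℝ β S p (1, 0) ^ 2 + fderivWithin ℝ β S p (0, 1) ^ 2 = 0 := by
    simpa [energyDensity, hμ.ne', hp.ne'] using h
  rw [add_eq_zero_iff_of_nonneg (sq_nonneg _) (sq_nonneg _), sq_eq_zero_iff, sq_eq_zero_iff] at hsum
  exact ContinuousLinearMap.prod_ext (ContinuousLinearMap.ext_ring (by simpa using hsum.1))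
    (ContinuousLinearMap.ext_ring (by simpa using hsum.2))

end Flux

theorem setIntegral_energyDensity_nonpos {μ c R L : ℝ} {β : ℝ × ℝ → ℝ} {S : Set (ℝ × ℝ)}
    (hc : c ≤ 0) (hR : 0 < R) (hL : 0 < L) (hS : S = Icc 0 R ×ˢ Icc 0 L)
    (hβC2 : ContDiffOn ℝ 2 β (Ioo 0 R ×ˢ Ioo 0 L)) (hβC1 : ContDiffOn ℝ 1 β S)
    (hpde : ∀ p ∈ Ioo 0 R ×ˢ Ioo 0 L,
      -μ * (fderivWithin ℝ (fun q => fderivWithin ℝ β S q (1, 0)) S p (1, 0)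
              + (3 / p.1) * fderivWithin ℝ β S p (1, 0)
              + fderivWithin ℝ (fun q => fderivWithin ℝ β S q (0, 1)) S p (0, 1))
          - c * (p.1 ^ 2 - R ^ 2) * fderivWithin ℝ β S p (0, 1) = 0)
    (hbot : ∀ r ∈ Icc 0 R, β (r, 0) = 0) (hlat : ∀ z ∈ Icc 0 L, β (R, z) = 0)
    (hrobin : ∀ r ∈ Ioo 0 R,
      μ * fderivWithin ℝ β S (r, L) (0, 1) + c * (r ^ 2 - R ^ 2) * β (r, L) = 0) :
    ∫ p in S, energyDensity μ β S p ≤ 0 := by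
  subst hS
  have hT : IsOpen (Ioo 0 R ×ˢ Ioo 0 L) := isOpen_Ioo.prod isOpen_Ioo
  have hnhds : ∀ p ∈ Ioo 0 R ×ˢ Ioo 0 L, Icc 0 R ×ˢ Icc 0 L ∈ 𝓝 p := fun p hp =>
    mem_of_superset (hT.mem_nhds hp) (prod_mono Ioo_subset_Icc_self Ioo_subset_Icc_self)
  have hC2 : ∀ p ∈ Ioo 0 R ×ˢ Ioo 0 L, ContDiffAt ℝ 2 β p := fun p hp =>
    hβC2.contDiffAt (hT.mem_nhds hp)
  have hu : UniqueDiffOn ℝ (Icc 0 R ×ˢ Icc 0 L) := (uniqueDiffOn_Icc hR).prod (uniqueDiffOn_Icc hL)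
  rw [setIntegral_eq_boundary_of_divergence_eq hR.le hL.le (continuousOn_radialFlux hβC1 hu)
    (continuousOn_axialFlux hβC1 hu) (continuousOn_energyDensity hβC1 hu)
    (fun p hp => differentiableAt_radialFlux (hnhds p hp) (hC2 p hp))
    (fun p hp => differentiableAt_axialFlux (hnhds p hp) (hC2 p hp))
    (fun p hp => fderiv_radialFlux_add_fderiv_axialFlux (hnhds p hp) (hC2 p hp) hp.1.1.ne'
      (hpde p hp))]
  have hbottom : ∫ x in 0..R, axialFlux μ c R β (Icc 0 R ×ˢ Icc 0 L) (x, 0) = 0 :=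
    intervalIntegral.integral_zero_ae <| ae_of_all _ fun x hx => axialFlux_eq_zero_of_eq_zero <|
      hbot x <| Ioc_subset_Icc_self <| uIoc_of_le hR.le ▸ hx
  have hlateral : ∫ z in 0..L, radialFlux μ β (Icc 0 R ×ˢ Icc 0 L) (R, z) = 0 :=
    intervalIntegral.integral_zero_ae <| ae_of_all _ fun z hz => radialFlux_eq_zero_of_eq_zero <|
      hlat z <| Ioc_subset_Icc_self <| uIoc_of_le hL.le ▸ hz
  have haxis : ∫ z in 0..L, radialFlux μ β (Icc 0 R ×ˢ Icc 0 L) (0, z) = 0 := by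
    simp [radialFlux]
  have htop : ∫ x in 0..R, axialFlux μ c R β (Icc 0 R ×ˢ Icc 0 L) (x, L) ≤ 0 := by
    rw [intervalIntegral.integral_of_le hR.le, integral_Ioc_eq_integral_Ioo]
    exact setIntegral_nonpos measurableSet_Ioo fun x hx => axialFlux_nonpos_of_robin hc hx.1.le
      (pow_le_pow_left₀ hx.1.le hx.2.le 2) (hrobin x hx)
  linarith

theorem beta_identically_zero_general
    (μ c R L : ℝ) (hμ : 0 < μ) (hc : c < 0) (hR : 0 < R) (hL : 0 < L)
    (β : ℝ × ℝ → ℝ)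
    (S : Set (ℝ × ℝ)) (hS : S = Set.Icc (0 : ℝ) R ×ˢ Set.Icc (0 : ℝ) L)
    (hβC2 : ContDiffOn ℝ 2 β (Set.Ioo (0 : ℝ) R ×ˢ Set.Ioo (0 : ℝ) L))
    (hβC1 : ContDiffOn ℝ 1 β S)
    (hpde : ∀ p ∈ Set.Ioo (0 : ℝ) R ×ˢ Set.Ioo (0 : ℝ) L,
      -μ * (fderivWithin ℝ (fun q => fderivWithin ℝ β S q (1, 0)) S p (1, 0)
              + (3 / p.1) * fderivWithin ℝ β S p (1, 0)
              + fderivWithin ℝ (fun q => fderivWithin ℝ β S q (0, 1)) S p (0, 1))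
          - c * (p.1 ^ 2 - R ^ 2) * fderivWithin ℝ β S p (0, 1) = 0)
    (hbot : ∀ r ∈ Set.Icc (0 : ℝ) R, β (r, 0) = 0)
    (hlat : ∀ z ∈ Set.Icc (0 : ℝ) L, β (R, z) = 0)
    (hrobin : ∀ r ∈ Set.Ioo (0 : ℝ) R,
      μ * fderivWithin ℝ β S (r, L) (0, 1) + c * (r ^ 2 - R ^ 2) * β (r, L) = 0) :
    ∀ p ∈ S, β p = 0 := by
  have hT : IsOpen (Ioo 0 R ×ˢ Ioo 0 L) := isOpen_Ioo.prod isOpen_Ioo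
  have hclosure : closure (Ioo 0 R ×ˢ Ioo 0 L) = S := by
    rw [hS, closure_prod_eq, closure_Ioo hR.ne, closure_Ioo hL.ne]
  have hTS : Ioo 0 R ×ˢ Ioo 0 L ⊆ S := hclosure ▸ subset_closure
  have hu : UniqueDiffOn ℝ S := hS ▸ (uniqueDiffOn_Icc hR).prod (uniqueDiffOn_Icc hL)
  have hE : EqOn (energyDensity μ β S) 0 (Ioo 0 R ×ˢ Ioo 0 L) :=
    eqOn_zero_of_setIntegral_nonpos (hS ▸ isCompact_Icc.prod isCompact_Icc) hT hTS
      (continuousOn_energyDensity hβC1 hu)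
      (fun p hp => energyDensity_nonneg hμ.le (hS ▸ hp).1.1)
      (setIntegral_energyDensity_nonpos hc.le hR hL hS hβC2 hβC1 hpde hbot hlat hrobin)
  have hgrad : EqOn (fderiv ℝ β) 0 (Ioo 0 R ×ˢ Ioo 0 L) := fun p hp => by
    rw [← fderivWithin_of_mem_nhds (mem_of_superset (hT.mem_nhds hp) hTS)]
    exact fderivWithin_eq_zero_of_energyDensity_eq_zero hμ hp.1.1 (hE hp)
  have hconst := hT.eqOn_closure_of_fderiv_eq_zero (isPreconnected_Ioo.prod isPreconnected_Ioo)
    (hβC2.differentiableOn two_ne_zero) (hclosure ▸ hβC1.continuousOn) hgrad (x₀ := (0, 0))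
    (by rw [hclosure, hS]; exact ⟨⟨le_rfl, hR.le⟩, le_rfl, hL.le⟩)
  intro p hp
  rw [hconst (hclosure ▸ hp)]
  exact hbot 0 ⟨le_rfl, hR.le⟩

/-- Uniqueness for the degenerate elliptic problem satisfied by `β`:
`−μ(β_rr + (3/r)β_r + β_zz) − c(r²−R²)β_z = 0` in `(0,R)×(0,L)` with
`β(r,0)=0`, `β(R,z)=0`, `β_r(0,z)=0` and the Robin condition
`μ β_z(r,L) + c(r²−R²)β(r,L) = 0`, where `μ>0`, `c<0`, forces `β ≡ 0`. -/
theorem beta_identically_zero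
    (μ c R L : ℝ) (hμ : 0 < μ) (hc : c < 0) (hR : 0 < R) (hL : 0 < L)
    (β : ℝ × ℝ → ℝ)
    (S : Set (ℝ × ℝ)) (hS : S = Set.Icc (0 : ℝ) R ×ˢ Set.Icc (0 : ℝ) L)
    (hβC2 : ContDiffOn ℝ 2 β (Set.Ioo (0 : ℝ) R ×ˢ Set.Ioo (0 : ℝ) L))
    (hβC1 : ContDiffOn ℝ 1 β S)
    (hpde : ∀ p ∈ Set.Ioo (0 : ℝ) R ×ˢ Set.Ioo (0 : ℝ) L,
      -μ * (fderivWithin ℝ (fun q => fderivWithin ℝ β S q (1, 0)) S p (1, 0)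
              + (3 / p.1) * fderivWithin ℝ β S p (1, 0)
              + fderivWithin ℝ (fun q => fderivWithin ℝ β S q (0, 1)) S p (0, 1))
          - c * (p.1 ^ 2 - R ^ 2) * fderivWithin ℝ β S p (0, 1) = 0)
    (hbot : ∀ r ∈ Set.Icc (0 : ℝ) R, β (r, 0) = 0)
    (hlat : ∀ z ∈ Set.Icc (0 : ℝ) L, β (R, z) = 0)
    (haxis : ∀ z ∈ Set.Icc (0 : ℝ) L, fderivWithin ℝ β S (0, z) (1, 0) = 0)
    (hrobin : ∀ r ∈ Set.Ioo (0 : ℝ) R,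
      μ * fderivWithin ℝ β S (r, L) (0, 1) + c * (r ^ 2 - R ^ 2) * β (r, L) = 0) :
    ∀ p ∈ S, β p = 0 :=
  beta_identically_zero_general μ c R L hμ hc hR hL β S hS hβC2 hβC1 hpde hbot hlat hrobin
end
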